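/- arXiv:2304.05145 — 2 statements merged into one kernel-verified Lean document; each statement's English description precedes it below -/
import Mathlib

section
/- Let n ≥ k ≥ 2 and let S be a nonempty family of k-element subsets of [n] whose support is [n] (every element of [n] belongs to some member of S). Let a be the k-binomial decomposition of |S|, and for each x ∈ [n] let c(x) be the (k−1)-binomial decomposition of |S(x)| and b(x) the k-binomial decomposition of |S| − |S(x)|. Suppose there exists x ∈ [n] with |S| − |S(x)| ≥ B(a−1, k) such that either (i) this inequality is strict, S(x)∖x ⊆ Δ(S∖S(x)), both S∖S(x) and S(x)∖x are extremal, and B(a, k−1) = B(b(x), k−1) + B(c(x), k−2); or (ii) |S| − |S(x)| = B(a−1, k), Δ(S∖S(x)) ⊆ S(x)∖x, and S(x)∖x is extremal. Then S is extremal. -/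
/-- Generalized binomial coefficient `C(n, j)`:
`C(n,j) = n(n-1)⋯(n-j+1)/j!` for `j ≥ 0` and `C(n,j) = 0` for `j < 0`. -/
def C (n j : ℤ) : ℤ :=
  if 0 ≤ j then
    if 0 ≤ n then ((n.toNat.choose j.toNat : ℕ) : ℤ)
    else (-1) ^ j.toNat * (((j - n - 1).toNat.choose j.toNat : ℕ) : ℤ)
  else 0

/-- `B a k = Σ_l C(a_l, k - l)`. -/
def B : List ℤ → ℤ → ℤ
  | [], _ => 0
  | x :: xs, k => C x k + B xs (k - 1)

/-- `a` has the shape of a `k`-binomial decomposition: strictly decreasing,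
length at most `k`, and `a_i ≥ k - i` for every index. -/
def IsKBinomSeq (k : ℕ) (a : List ℤ) : Prop :=
  a.Chain' (· > ·) ∧ a.length ≤ k ∧ ∀ i < a.length, (k : ℤ) - i ≤ a.getD i 0

/-- `a` is the `k`-binomial decomposition of `m`. -/
def IsKBinom (k : ℕ) (m : ℤ) (a : List ℤ) : Prop :=
  IsKBinomSeq k a ∧ m = B a (k : ℤ)

/-- Non-strict lexicographic order on integer sequences. -/
def lexLE (x y : List ℤ) : Prop := x = y ∨ List.Lex (· < ·) x y

/-- A family `T` of `j`-element sets is extremal if `|Δ(T)| = B(d, j-1)`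
where `d` is the `j`-binomial decomposition of `|T|`. -/
def IsExtremal {α : Type} [DecidableEq α] (j : ℕ) (T : Finset (Finset α)) : Prop :=
  ∃ d : List ℤ, IsKBinom j (T.card : ℤ) d ∧ ((Finset.shadow T).card : ℤ) = B d ((j : ℤ) - 1)

/-!
Splitting the shadow of `S` at `x` into the sets that avoid `x` and those that contain it gives
`|Δ S| = |Δ(S ∖ S(x)) ∪ (S(x) ∖ x)| + |Δ(S(x) ∖ x)|`.

In case (i) the union is `Δ(S ∖ S(x))`; since binomial decompositions are unique, extremality of
both parts turns the right-hand side into `B(b(x), k-1) + B(c(x), k-2) = B(a, k-1)`.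

In case (ii) the union is `S(x) ∖ x`, of size `|S| - B(a-1, k) = B(a-1, k-1)` by Pascal's rule.
The shifted sequence `a - 1` is a `(k-1)`-binomial decomposition up to carries that do not change
its value one level down, so `|Δ(S(x) ∖ x)| = B(c(x), k-2) = B(a-1, k-2)`, and Pascal's rule again
gives `|Δ S| = B(a, k-1)`.
-/

lemma C_of_neg (n : ℤ) {j : ℤ} (hj : j < 0) : C n j = 0 := by
  simp [C, hj.not_ge]

lemma C_of_nonneg {n j : ℤ} (hn : 0 ≤ n) (hj : 0 ≤ j) : C n j = n.toNat.choose j.toNat := by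
  simp [C, hn, hj]

lemma C_zero_right {n : ℤ} (hn : 0 ≤ n) : C n 0 = 1 := by
  simp [C_of_nonneg hn le_rfl]

lemma C_nonneg {n : ℤ} (hn : 0 ≤ n) (j : ℤ) : 0 ≤ C n j := by
  rcases lt_or_ge j 0 with hj | hj
  · simp [C_of_neg n hj]
  · rw [C_of_nonneg hn hj]
    positivity

lemma C_pos {n j : ℤ} (hj : 0 ≤ j) (hjn : j ≤ n) : 0 < C n j := by
  rw [C_of_nonneg (hj.trans hjn) hj]
  exact_mod_cast Nat.choose_pos (by omega)

lemma C_succ_left {n : ℤ} (hn : 0 ≤ n) (j : ℤ) : C (n + 1) j = C n j + C n (j - 1) := by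
  rcases lt_trichotomy j 0 with hj | rfl | hj
  · simp [C_of_neg _ hj, C_of_neg _ (show j - 1 < 0 by omega)]
  · simp [C_zero_right hn, C_zero_right (show 0 ≤ n + 1 by omega), C_of_neg]
  · rw [C_of_nonneg (by omega) hj.le, C_of_nonneg hn hj.le, C_of_nonneg hn (by omega),
      show (n + 1).toNat = n.toNat + 1 by omega, show j.toNat = (j - 1).toNat + 1 by omega,
      Nat.choose_succ_succ]
    push_cast
    ring

lemma C_eq_C_sub_one_add {n : ℤ} (hn : 1 ≤ n) (j : ℤ) :
    C n j = C (n - 1) j + C (n - 1) (j - 1) := by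
  simpa using C_succ_left (n := n - 1) (by omega) j

lemma C_mono_left {n m : ℤ} (hn : 0 ≤ n) (h : n ≤ m) (j : ℤ) : C n j ≤ C m j := by
  rcases lt_or_ge j 0 with hj | hj
  · simp [C_of_neg _ hj]
  · rw [C_of_nonneg hn hj, C_of_nonneg (hn.trans h) hj]
    exact_mod_cast Nat.choose_le_choose _ (by omega)

lemma C_eq_C_of_nonpos {n m j : ℤ} (hn : 0 ≤ n) (hm : 0 ≤ m) (hj : j ≤ 0) : C n j = C m j := by
  rcases hj.lt_or_eq with hj | rfl
  · rw [C_of_neg n hj, C_of_neg m hj]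
  · rw [C_zero_right hn, C_zero_right hm]

lemma B_nil (j : ℤ) : B [] j = 0 := rfl

lemma B_cons (x : ℤ) (t : List ℤ) (j : ℤ) : B (x :: t) j = C x j + B t (j - 1) := rfl

lemma B_succ_cons (x : ℤ) (t : List ℤ) (k : ℕ) :
    B (x :: t) ((k + 1 : ℕ) : ℤ) = C x (k + 1) + B t k := by
  rw [B_cons]
  push_cast
  ring_nf

lemma B_nonneg {a : List ℤ} (ha : ∀ x ∈ a, 0 ≤ x) (j : ℤ) : 0 ≤ B a j := by
  induction a generalizing j with
  | nil => exact le_rfl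
  | cons x t ih =>
    rw [B_cons]
    have := C_nonneg (ha x (by simp)) j
    have := ih (fun y hy => ha y (by simp [hy])) (j - 1)
    omega

lemma B_eq_B_map_sub_one_add {a : List ℤ} (ha : ∀ x ∈ a, 1 ≤ x) (j : ℤ) :
    B a j = B (a.map (· - 1)) j + B (a.map (· - 1)) (j - 1) := by
  induction a generalizing j with
  | nil => rfl
  | cons x t ih =>
    rw [List.map_cons, B_cons, B_cons, B_cons, C_eq_C_sub_one_add (ha x (by simp)),
      ih (fun y hy => ha y (by simp [hy]))]
    ring

lemma isKBinomSeq_nil (k : ℕ) : IsKBinomSeq k [] := by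
  simp [IsKBinomSeq, List.Chain']

lemma not_isKBinomSeq_zero_cons (x : ℤ) (t : List ℤ) : ¬ IsKBinomSeq 0 (x :: t) := by
  simp [IsKBinomSeq, List.Chain']

lemma isKBinomSeq_succ_cons_iff {k : ℕ} {x : ℤ} {t : List ℤ} :
    IsKBinomSeq (k + 1) (x :: t) ↔
      (k + 1 : ℤ) ≤ x ∧ (∀ y ∈ t.head?, y < x) ∧ IsKBinomSeq k t := by
  simp only [IsKBinomSeq, List.Chain', List.isChain_cons, List.length_cons, Nat.forall_lt_succ_left,
    List.getD_cons_zero, List.getD_cons_succ]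
  push_cast
  constructor
  · rintro ⟨⟨hhead, hchain⟩, hlen, hx, hentries⟩
    exact ⟨by simpa using hx, hhead, hchain, by omega, fun i hi => by linarith [hentries i hi]⟩
  · rintro ⟨hx, hhead, hchain, hlen, hentries⟩
    exact ⟨⟨hhead, hchain⟩, by omega, by simpa using hx, fun i hi => by linarith [hentries i hi]⟩

lemma IsKBinomSeq.one_le {k : ℕ} {a : List ℤ} (ha : IsKBinomSeq k a) : ∀ x ∈ a, 1 ≤ x := by
  induction a generalizing k with
  | nil => simp
  | cons x t ih =>
    obtain _ | k := k
    · exact absurd ha (not_isKBinomSeq_zero_cons x t)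
    obtain ⟨hx, -, ht⟩ := isKBinomSeq_succ_cons_iff.mp ha
    rintro y (_ | ⟨_, hy⟩)
    · omega
    · exact ih ht y hy

lemma IsKBinomSeq.B_lt_C {k : ℕ} {a : List ℤ} (ha : IsKBinomSeq k a) {M : ℤ}
    (hM : ∀ x ∈ a.head?, x < M) (hkM : (k : ℤ) ≤ M) : B a k < C M k := by
  induction a generalizing k M with
  | nil => exact C_pos (by positivity) hkM
  | cons x t ih =>
    obtain _ | k := k
    · exact absurd ha (not_isKBinomSeq_zero_cons x t)
    obtain ⟨hx, hhead, ht⟩ := isKBinomSeq_succ_cons_iff.mp ha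
    have hxM : x < M := hM x rfl
    calc B (x :: t) ((k + 1 : ℕ) : ℤ) = C x (k + 1) + B t k := B_succ_cons x t k
      _ < C x (k + 1) + C x k := by gcongr; exact ih ht hhead (by omega)
      _ = C (x + 1) (k + 1) := by rw [C_succ_left (by omega)]; ring_nf
      _ ≤ C M ((k + 1 : ℕ) : ℤ) := by push_cast; exact C_mono_left (by omega) (by omega) _

lemma IsKBinomSeq.C_le_B {k : ℕ} {y : ℤ} {t : List ℤ} (h : IsKBinomSeq k (y :: t)) :
    C y k ≤ B (y :: t) k := by
  rw [B_cons, le_add_iff_nonneg_right]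
  exact B_nonneg (fun z hz => zero_le_one.trans (h.one_le z (by simp [hz]))) _

lemma IsKBinomSeq.B_lt_of_head_lt {k : ℕ} {a t : List ℤ} {y : ℤ} (ha : IsKBinomSeq k a)
    (hb : IsKBinomSeq k (y :: t)) (hlt : ∀ x ∈ a.head?, x < y) : B a k < B (y :: t) k := by
  obtain _ | k := k
  · exact absurd hb (not_isKBinomSeq_zero_cons y t)
  have hy := (isKBinomSeq_succ_cons_iff.mp hb).1
  exact (ha.B_lt_C hlt (by push_cast; exact hy)).trans_le hb.C_le_B

lemma IsKBinomSeq.eq_of_B_eq {k : ℕ} {a b : List ℤ} (ha : IsKBinomSeq k a)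
    (hb : IsKBinomSeq k b) (hab : B a k = B b k) : a = b := by
  induction a generalizing k b with
  | nil =>
    cases b with
    | nil => rfl
    | cons y t => exact absurd hab (ha.B_lt_of_head_lt hb (by simp)).ne
  | cons x s ih =>
    cases b with
    | nil => exact absurd hab (hb.B_lt_of_head_lt ha (by simp)).ne'
    | cons y t =>
      rcases lt_trichotomy x y with hxy | rfl | hxy
      · exact absurd hab (ha.B_lt_of_head_lt hb (by simpa using hxy)).ne
      · obtain _ | k := k
        · exact absurd ha (not_isKBinomSeq_zero_cons x s)
        rw [B_succ_cons, B_succ_cons, add_right_inj] at hab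
        rw [ih (isKBinomSeq_succ_cons_iff.mp ha).2.2 (isKBinomSeq_succ_cons_iff.mp hb).2.2 hab]
      · exact absurd hab (hb.B_lt_of_head_lt ha (by simpa using hxy)).ne'

lemma IsKBinom.unique {k : ℕ} {m : ℤ} {a b : List ℤ} (ha : IsKBinom k m a)
    (hb : IsKBinom k m b) : a = b :=
  ha.1.eq_of_B_eq hb.1 (ha.2.symm.trans hb.2)

/-- The last conjunct (the head of `c` reaches the head of `a` only when `c` is a singleton) is
what makes the induction go through: it decides whether the new head merges with `c`. -/
lemma exists_isKBinomSeq_B_eq_B_map_sub_one {p : ℕ} (hp : 1 ≤ p) {a : List ℤ}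
    (ha : IsKBinomSeq (p + 1) a) :
    ∃ c, IsKBinomSeq p c ∧ (∀ j ≤ (p : ℤ), B c j = B (a.map (· - 1)) j) ∧
      ∀ y ∈ c.head?, y < a.headD 0 ∨ c = [a.headD 0] := by
  induction p, hp using Nat.le_induction generalizing a with
  | base =>
    match a, ha with
    | [], _ => exact ⟨[], isKBinomSeq_nil 1, fun _ _ => rfl, by simp⟩
    | [x], ha =>
      have hx := (isKBinomSeq_succ_cons_iff.mp ha).1
      refine ⟨[x - 1], isKBinomSeq_succ_cons_iff.mpr ⟨by push_cast; omega, by simp,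
        isKBinomSeq_nil 0⟩, fun _ _ => rfl, by simp⟩
    | [x, y], ha =>
      obtain ⟨hx, -, hy⟩ := isKBinomSeq_succ_cons_iff.mp ha
      obtain ⟨hy, -, -⟩ := isKBinomSeq_succ_cons_iff.mp hy
      refine ⟨[x], isKBinomSeq_succ_cons_iff.mpr ⟨by push_cast; omega, by simp, isKBinomSeq_nil 0⟩,
        fun j hj => ?_, by simp⟩
      simp only [List.map_cons, List.map_nil, B_cons, B_nil, C_eq_C_sub_one_add (by omega : 1 ≤ x),
        C_eq_C_of_nonpos (show 0 ≤ x - 1 by omega) (show 0 ≤ y - 1 by omega)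
          (show j - 1 ≤ 0 by push_cast at hj; omega)]
      ring
    | _ :: _ :: _ :: _, ha => exact absurd ha.2.1 (by simp)
  | succ p hp ih =>
    match a, ha with
    | [], _ => exact ⟨[], isKBinomSeq_nil _, fun _ _ => rfl, by simp⟩
    | x :: t, ha =>
      obtain ⟨hx, hhead, ht⟩ := isKBinomSeq_succ_cons_iff.mp ha
      obtain ⟨c, hc, hcB, hchead⟩ := ih ht
      have hBcons : ∀ j ≤ ((p + 1 : ℕ) : ℤ),
          C (x - 1) j + B c (j - 1) = B ((x :: t).map (· - 1)) j := fun j hj => by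
        rw [List.map_cons, B_cons, hcB (j - 1) (by push_cast at hj; omega)]
      by_cases hmerge : c = [x - 1]
      · refine ⟨[x], isKBinomSeq_succ_cons_iff.mpr ⟨by push_cast at hx ⊢; omega, by simp,
          isKBinomSeq_nil _⟩, fun j hj => ?_, by simp⟩
        rw [← hBcons j hj, hmerge, B_cons, B_cons, B_nil, B_nil,
          C_eq_C_sub_one_add (by push_cast at hx; omega)]
        ring
      · have htx : t.headD 0 < x := by
          cases t with
          | nil => push_cast at hx; simpa using (by omega : (0 : ℤ) < x)
          | cons y t => exact hhead y rfl
        refine ⟨(x - 1) :: c, isKBinomSeq_succ_cons_iff.mpr ⟨by push_cast at hx ⊢; omega,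
          fun y hy => ?_, hc⟩, fun j hj => (B_cons _ _ _).trans (hBcons j hj), by simp⟩
        rcases hchead y hy with hy' | rfl
        · omega
        · have : t.headD 0 ≠ x - 1 := fun h => hmerge (by rw [← h])
          simp only [List.head?_cons, Option.mem_def, Option.some.injEq] at hy
          omega

lemma B_eq_B_map_sub_one_of_isKBinom {p : ℕ} (hp : 1 ≤ p) {a c : List ℤ}
    (ha : IsKBinomSeq (p + 1) a) (hc : IsKBinom p (B (a.map (· - 1)) p) c) {j : ℤ}
    (hj : j ≤ p) : B c j = B (a.map (· - 1)) j := by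
  obtain ⟨c', hc', hB, -⟩ := exists_isKBinomSeq_B_eq_B_map_sub_one hp ha
  rw [hc.1.eq_of_B_eq hc' (hc.2.symm.trans (hB p le_rfl).symm), hB j hj]

namespace Finset

open FinsetFamily

variable {α : Type*} [DecidableEq α] (𝒜 : Finset (Finset α)) (a : α)

lemma memberSubfamily_shadow : (∂ 𝒜).memberSubfamily a = ∂ (𝒜.memberSubfamily a) := by
  ext s
  simp only [mem_memberSubfamily, mem_shadow_iff_insert_mem, mem_insert, not_or]
  constructor
  · rintro ⟨⟨b, ⟨hba, hbs⟩, hb⟩, has⟩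
    exact ⟨b, hbs, by rwa [insert_comm], Ne.symm hba, has⟩
  · rintro ⟨b, hbs, hb, hab, has⟩
    exact ⟨⟨b, ⟨Ne.symm hab, hbs⟩, by rwa [insert_comm]⟩, has⟩

lemma nonMemberSubfamily_shadow :
    (∂ 𝒜).nonMemberSubfamily a = ∂ (𝒜.nonMemberSubfamily a) ∪ 𝒜.memberSubfamily a := by
  ext s
  simp only [mem_nonMemberSubfamily, mem_union, mem_memberSubfamily, mem_shadow_iff_insert_mem,
    mem_insert, not_or]
  constructor
  · rintro ⟨⟨b, hbs, hb⟩, has⟩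
    by_cases hba : b = a
    · exact Or.inr ⟨hba ▸ hb, has⟩
    · exact Or.inl ⟨b, hbs, hb, Ne.symm hba, has⟩
  · rintro (⟨b, hbs, hb, -, has⟩ | ⟨ha, has⟩)
    · exact ⟨⟨b, hbs, hb⟩, has⟩
    · exact ⟨⟨a, has, ha⟩, has⟩

lemma card_shadow_eq_card_shadow_memberSubfamily_add :
    #(∂ 𝒜) = #(∂ (𝒜.memberSubfamily a)) + #(∂ (𝒜.nonMemberSubfamily a) ∪ 𝒜.memberSubfamily a) := by
  rw [← memberSubfamily_shadow, ← nonMemberSubfamily_shadow,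
    card_memberSubfamily_add_card_nonMemberSubfamily]

lemma card_memberSubfamily : #(𝒜.memberSubfamily a) = #{s ∈ 𝒜 | a ∈ s} :=
  card_image_of_injOn <| (erase_injOn' a).mono fun _ hs => (mem_filter.mp hs).2

end Finset

lemma IsExtremal.card_shadow_eq {α : Type} [DecidableEq α] {j : ℕ} {T : Finset (Finset α)}
    (hT : IsExtremal j T) {d : List ℤ} (hd : IsKBinom j T.card d) :
    ((Finset.shadow T).card : ℤ) = B d (j - 1) := by
  obtain ⟨d', hd', hshadow⟩ := hT
  rw [hshadow, hd'.unique hd]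

theorem extremal_characterization_sufficiency_general
    (n k : ℕ) (hk : 2 ≤ k)
    (S : Finset (Finset (Fin n)))
    (a : List ℤ) (ha : IsKBinom k (S.card : ℤ) a)
    (c : Fin n → List ℤ)
    (hc : ∀ x : Fin n, IsKBinom (k - 1) (((S.filter (fun X => x ∈ X)).card : ℤ)) (c x))
    (b : Fin n → List ℤ)
    (hb : ∀ x : Fin n,
      IsKBinom k ((S.card : ℤ) - ((S.filter (fun X => x ∈ X)).card : ℤ)) (b x))
    (hx : ∃ x : Fin n,
      B (a.map (· - 1)) (k : ℤ) ≤ (S.card : ℤ) - ((S.filter (fun X => x ∈ X)).card : ℤ) ∧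
      ((B (a.map (· - 1)) (k : ℤ) < (S.card : ℤ) - ((S.filter (fun X => x ∈ X)).card : ℤ) ∧
          (S.filter (fun X => x ∈ X)).image (fun X => X.erase x)
            ⊆ Finset.shadow (S.filter (fun X => x ∉ X)) ∧
          IsExtremal k (S.filter (fun X => x ∉ X)) ∧
          IsExtremal (k - 1) ((S.filter (fun X => x ∈ X)).image (fun X => X.erase x)) ∧
          B a ((k : ℤ) - 1) = B (b x) ((k : ℤ) - 1) + B (c x) ((k : ℤ) - 2)) ∨
        ((S.card : ℤ) - ((S.filter (fun X => x ∈ X)).card : ℤ) = B (a.map (· - 1)) (k : ℤ) ∧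
          Finset.shadow (S.filter (fun X => x ∉ X))
            ⊆ (S.filter (fun X => x ∈ X)).image (fun X => X.erase x) ∧
          IsExtremal (k - 1) ((S.filter (fun X => x ∈ X)).image (fun X => X.erase x))))) :
    IsExtremal k S := by
  obtain ⟨p, rfl⟩ : ∃ p, k = p + 1 := ⟨k - 1, by omega⟩
  have hsucc : ((p + 1 : ℕ) : ℤ) - 1 = p := by push_cast; ring
  obtain ⟨x, -, hcase⟩ := hx
  rw [show {X ∈ S | x ∈ X}.image (·.erase x) = S.memberSubfamily x from rfl,
    show {X ∈ S | x ∉ X} = S.nonMemberSubfamily x from rfl, Nat.add_sub_cancel, hsucc] at hcase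
  have hcx : IsKBinom p (S.memberSubfamily x).card (c x) := by
    simpa [Finset.card_memberSubfamily] using hc x
  refine ⟨a, ha, ?_⟩
  rw [Finset.card_shadow_eq_card_shadow_memberSubfamily_add S x, Nat.cast_add, hsucc]
  rcases hcase with ⟨-, hsub, hDext, hLext, hBa⟩ | ⟨hdeg, hsub, hLext⟩
  · have hbx : IsKBinom (p + 1) (S.nonMemberSubfamily x).card (b x) := by
      convert hb x using 2
      have := Finset.card_memberSubfamily_add_card_nonMemberSubfamily x S
      rw [Finset.card_memberSubfamily] at this
      omega
    rw [Finset.union_eq_left.2 hsub, hLext.card_shadow_eq hcx, hDext.card_shadow_eq hbx, hsucc, hBa,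
      add_comm, show (p : ℤ) - 1 = (p + 1 : ℕ) - 2 by push_cast; ring]
  · have hpascal := B_eq_B_map_sub_one_add ha.1.one_le
    have hL : ((S.memberSubfamily x).card : ℤ) = B (a.map (· - 1)) p := by
      have hS : (S.card : ℤ) = B a (p + 1) := by exact_mod_cast ha.2
      have := hpascal (p + 1)
      rw [Finset.card_memberSubfamily]
      push_cast at hdeg
      rw [add_sub_cancel_right] at this
      linarith
    rw [Finset.union_eq_right.2 hsub, hLext.card_shadow_eq hcx, hL,
      B_eq_B_map_sub_one_of_isKBinom (by omega) ha.1 (hL ▸ hcx) (by omega), add_comm, hpascal]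

/-- Characterization of extremal families (sufficiency): if for some `x` the
degree condition together with alternative (i) or (ii) holds, then `S` is extremal. -/
theorem extremal_characterization_sufficiency
    (n k : ℕ) (hk : 2 ≤ k) (hkn : k ≤ n)
    (S : Finset (Finset (Fin n))) (hS : S.Nonempty) (hScard : ∀ X ∈ S, X.card = k)
    (hsupp : ∀ y : Fin n, ∃ X ∈ S, y ∈ X)
    (a : List ℤ) (ha : IsKBinom k (S.card : ℤ) a)
    (c : Fin n → List ℤ)
    (hc : ∀ x : Fin n, IsKBinom (k - 1) (((S.filter (fun X => x ∈ X)).card : ℤ)) (c x))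
    (b : Fin n → List ℤ)
    (hb : ∀ x : Fin n,
      IsKBinom k ((S.card : ℤ) - ((S.filter (fun X => x ∈ X)).card : ℤ)) (b x))
    (hx : ∃ x : Fin n,
      B (a.map (· - 1)) (k : ℤ) ≤ (S.card : ℤ) - ((S.filter (fun X => x ∈ X)).card : ℤ) ∧
      ((B (a.map (· - 1)) (k : ℤ) < (S.card : ℤ) - ((S.filter (fun X => x ∈ X)).card : ℤ) ∧
          (S.filter (fun X => x ∈ X)).image (fun X => X.erase x)
            ⊆ Finset.shadow (S.filter (fun X => x ∉ X)) ∧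
          IsExtremal k (S.filter (fun X => x ∉ X)) ∧
          IsExtremal (k - 1) ((S.filter (fun X => x ∈ X)).image (fun X => X.erase x)) ∧
          B a ((k : ℤ) - 1) = B (b x) ((k : ℤ) - 1) + B (c x) ((k : ℤ) - 2)) ∨
        ((S.card : ℤ) - ((S.filter (fun X => x ∈ X)).card : ℤ) = B (a.map (· - 1)) (k : ℤ) ∧
          Finset.shadow (S.filter (fun X => x ∉ X))
            ⊆ (S.filter (fun X => x ∈ X)).image (fun X => X.erase x) ∧
          IsExtremal (k - 1) ((S.filter (fun X => x ∈ X)).image (fun X => X.erase x))))) :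
    IsExtremal k S :=
  extremal_characterization_sufficiency_general n k hk S a ha c hc b hb hx
end

section
/- Let n and k be integers with n > k > 1, and let S be a family of k-element subsets of [n] with |S| = m > 1 whose support is [n]. Let x ∈ [n] be an element of minimum degree in S, i.e. d_S(x) ≤ d_S(y) for all y ∈ [n]. Let a be the k-binomial decomposition of m and b the k-binomial decomposition of |S| − d_S(x). Then b is not the empty sequence and b ≥_lex a−1. -/
/-! Double counting gives `n · d_S(x) ≤ k · m`, so `m - d_S(x) ≥ (n - k) m / n`. It therefore
suffices that `b <_lex a - 1` forces `n · B(b, k) < (n - k) · B(a, k)`. The two sides are compared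
through `(n - k) C(h, k) = n C(h - 1, k) + (n - h) C(h - 1, k - 1)`, where `h = a_0 ≤ n` because
`m ≤ C(n, k)`: if `b_0 < a_0 - 1` then `B(b, k) < C(a_0 - 1, k)`, and if `b_0 = a_0 - 1` one strips
the common head and recurses with `(n - 1, k - 1)`, which keeps `n - k` fixed. -/

lemma C_of_nonneg_s7 {x j : ℤ} (hx : 0 ≤ x) (hj : 0 ≤ j) :
    C x j = (x.toNat.choose j.toNat : ℤ) := by
  simp [C, hx, hj]

lemma C_natCast (x j : ℕ) : C x j = (x.choose j : ℤ) := by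
  simp [C_of_nonneg_s7]

lemma C_nonneg_s7 {x j : ℤ} (hx : 0 ≤ x) (hj : 0 ≤ j) : 0 ≤ C x j := by
  rw [C_of_nonneg_s7 hx hj]; positivity

lemma one_le_C {x j : ℤ} (hj : 0 ≤ j) (hjx : j ≤ x) : 1 ≤ C x j := by
  rw [C_of_nonneg_s7 (hj.trans hjx) hj]
  exact_mod_cast Nat.choose_pos (by omega)

lemma C_mono_left_s7 {x y j : ℤ} (hx : 0 ≤ x) (hxy : x ≤ y) (hj : 0 ≤ j) :
    C x j ≤ C y j := by
  rw [C_of_nonneg_s7 hx hj, C_of_nonneg_s7 (hx.trans hxy) hj]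
  exact_mod_cast Nat.choose_le_choose _ (by omega)

lemma C_add_one {x j : ℤ} (hx : 0 ≤ x) (hj : 1 ≤ j) : C (x + 1) j = C x j + C x (j - 1) := by
  lift x to ℕ using hx
  obtain ⟨j, rfl⟩ : ∃ j' : ℕ, j = j' + 1 := ⟨(j - 1).toNat, by omega⟩
  rw [add_sub_cancel_right]
  simp only [← Nat.cast_succ, C_natCast, Nat.choose_succ_succ', Nat.cast_add]
  ring

lemma C_lt_C {x y j : ℤ} (hj : 1 ≤ j) (hjx : j ≤ x) (hxy : x < y) : C x j < C y j :=
  calc C x j < C x j + C x (j - 1) := by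
        linarith [one_le_C (x := x) (j := j - 1) (by omega) (by omega)]
    _ = C (x + 1) j := (C_add_one (by omega) hj).symm
    _ ≤ C y j := C_mono_left_s7 (by omega) hxy (by omega)

lemma sub_mul_C (n : ℤ) {x j : ℤ} (hx : 1 ≤ x) (hj : 1 ≤ j) :
    (n - j) * C x j = n * C (x - 1) j + (n - x) * C (x - 1) (j - 1) := by
  obtain ⟨x, rfl⟩ : ∃ x' : ℕ, x = x' + 1 := ⟨(x - 1).toNat, by omega⟩
  obtain ⟨j, rfl⟩ : ∃ j' : ℕ, j = j' + 1 := ⟨(j - 1).toNat, by omega⟩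
  have absorb := Nat.add_one_mul_choose_eq x j
  rw [Nat.choose_succ_succ'] at absorb
  rw [add_sub_cancel_right, add_sub_cancel_right]
  simp only [← Nat.cast_succ, C_natCast, Nat.choose_succ_succ', Nat.cast_add]
  push_cast
  linear_combination (by exact_mod_cast absorb :
    ((x : ℤ) + 1) * x.choose j = (x.choose j + x.choose (j + 1)) * (j + 1))

def IsBinomSeq : ℤ → List ℤ → Prop
  | _, [] => True
  | κ, h :: t => 1 ≤ κ ∧ κ ≤ h ∧ (∀ y ∈ t, y < h) ∧ IsBinomSeq (κ - 1) t

lemma IsKBinomSeq.isBinomSeq : ∀ {k : ℕ} {a : List ℤ}, IsKBinomSeq k a → IsBinomSeq k a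
  | _, [], _ => trivial
  | k, h :: t, ⟨hchain, hlen, hbound⟩ => by
    obtain ⟨k, rfl⟩ : ∃ k' : ℕ, k = k' + 1 := ⟨k - 1, by simp at hlen; omega⟩
    have htail : IsKBinomSeq k t := by
      refine ⟨hchain.tail, by simpa using hlen, fun i hi => ?_⟩
      have := hbound (i + 1) (by simpa using hi)
      simp only [List.getD_cons_succ] at this
      push_cast at this
      linarith
    refine ⟨by simp, by simpa using hbound 0 (by simp), ?_, by simpa using htail.isBinomSeq⟩
    exact (List.pairwise_cons.mp (List.isChain_iff_pairwise.mp hchain)).1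

namespace IsBinomSeq

lemma B_nonneg : ∀ {κ : ℤ} {c : List ℤ}, IsBinomSeq κ c → 0 ≤ B c κ
  | _, [], _ => le_rfl
  | _, _ :: _, ⟨_, hh, _, ht⟩ => add_nonneg (C_nonneg_s7 (by omega) (by omega)) ht.B_nonneg

lemma one_le_B {κ h : ℤ} {t : List ℤ} (hc : IsBinomSeq κ (h :: t)) : 1 ≤ B (h :: t) κ := by
  obtain ⟨hκ, hh, _, ht⟩ := hc
  show 1 ≤ C h κ + B t (κ - 1)
  linarith [one_le_C (by omega) hh, ht.B_nonneg]

lemma B_tail_lt :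
    ∀ {κ h : ℤ} {t : List ℤ}, IsBinomSeq κ (h :: t) → B t (κ - 1) < C h (κ - 1)
  | _, _, [], ⟨hκ, hh, _, _⟩ => one_le_C (by omega) (by omega)
  | κ, h, h' :: t', ⟨_, _, hlt, ht⟩ =>
    calc B (h' :: t') (κ - 1) = C h' (κ - 1) + B t' (κ - 1 - 1) := rfl
      _ < C h' (κ - 1) + C h' (κ - 1 - 1) := by linarith [ht.B_tail_lt]
      _ = C (h' + 1) (κ - 1) := (C_add_one (by linarith [ht.2.1]) ht.1).symm
      _ ≤ C h (κ - 1) :=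
        C_mono_left_s7 (by linarith [ht.1, ht.2.1]) (hlt h' (by simp)) (by linarith [ht.1])

lemma B_lt_C_add_one {κ h : ℤ} {t : List ℤ} (hc : IsBinomSeq κ (h :: t)) :
    B (h :: t) κ < C (h + 1) κ := by
  rw [C_add_one (by linarith [hc.1, hc.2.1]) hc.1]
  exact add_lt_add_right hc.B_tail_lt _

lemma mul_B_lt_of_lex_map_pred {a : List ℤ} :
    ∀ {b : List ℤ} {κ n : ℤ}, IsBinomSeq κ a → IsBinomSeq κ b → κ < n → B a κ ≤ C n κ →
      List.Lex (· < ·) b (a.map (· - 1)) → n * B b κ < (n - κ) * B a κ := by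
  induction a with
  | nil => intro _ _ _ _ _ _ _ hlex; cases hlex
  | cons h t ih =>
    intro b κ n ha hb hκn haC hlex
    obtain ⟨hκ, hκh, -, ht⟩ := id ha
    have hBa : B (h :: t) κ = C h κ + B t (κ - 1) := rfl
    have hhn : h ≤ n := not_lt.mp fun hnh => by
      linarith [C_lt_C hκ hκn.le hnh, ht.B_nonneg]
    have hhead : n * C (h - 1) κ ≤ (n - κ) * C h κ := by
      rw [sub_mul_C n (by omega) hκ]
      nlinarith [C_nonneg_s7 (x := h - 1) (j := κ - 1) (by omega) (by omega)]
    rw [List.map_cons] at hlex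
    cases hlex with
    | nil => simpa [B] using mul_pos (by omega : 0 < n - κ) (by linarith [ha.one_le_B])
    | @rel b₀ l _ _ hlt =>
      have hb_lt : B (b₀ :: l) κ < C (h - 1) κ :=
        hb.B_lt_C_add_one.trans_le (C_mono_left_s7 (by linarith [hb.2.1]) (by omega) (by omega))
      calc n * B (b₀ :: l) κ < n * C (h - 1) κ := by gcongr; omega
        _ ≤ (n - κ) * C h κ := hhead
        _ ≤ (n - κ) * B (h :: t) κ := by gcongr; linarith [ht.B_nonneg]
    | @cons _ l _ hl =>
      obtain ⟨h', t', rfl⟩ := List.exists_cons_of_ne_nil (show t ≠ [] by rintro rfl; cases hl)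
      have hhn' : h < n := lt_of_le_of_ne hhn fun hn => by
        subst hn; linarith [ht.one_le_B]
      have htC : B (h' :: t') (κ - 1) ≤ C (n - 1) (κ - 1) :=
        ha.B_tail_lt.le.trans (C_mono_left_s7 (by omega) (by omega) (by omega))
      have hrec := ih ht hb.2.2.2 (by omega) htC hl
      have hl_lt : B l (κ - 1) < C (h - 1) (κ - 1) := hb.B_tail_lt
      have htail : B l (κ - 1) ≤ (n - h) * C (h - 1) (κ - 1) := by
        nlinarith [C_nonneg_s7 (x := h - 1) (j := κ - 1) (by omega) (by omega)]
      rw [show n - 1 - (κ - 1) = n - κ by ring] at hrec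
      calc n * B ((h - 1) :: l) κ
          = n * C (h - 1) κ + ((n - 1) * B l (κ - 1) + B l (κ - 1)) := by simp only [B]; ring
        _ < n * C (h - 1) κ +
              ((n - κ) * B (h' :: t') (κ - 1) + (n - h) * C (h - 1) (κ - 1)) := by linarith
        _ = (n - κ) * B (h :: h' :: t') κ := by
            rw [hBa, mul_add, sub_mul_C n (by omega) hκ]; ring

end IsBinomSeq

lemma card_mul_card_filter_mem_le {α : Type*} [Fintype α] [DecidableEq α]
    {S : Finset (Finset α)} {k : ℕ} (hS : ∀ X ∈ S, X.card = k) {x : α}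
    (hmin : ∀ y, (S.filter (fun X => x ∈ X)).card ≤ (S.filter (fun X => y ∈ X)).card) :
    Fintype.card α * (S.filter (fun X => x ∈ X)).card ≤ k * S.card :=
  calc _ ≤ ∑ X ∈ S, X.card := Finset.le_sum_card hmin
    _ = k * S.card := by rw [Finset.sum_congr rfl hS, Finset.sum_const, smul_eq_mul, mul_comm]

lemma lexLE_of_not_lex {x y : List ℤ} (h : ¬List.Lex (· < ·) y x) : lexLE x y := by
  by_cases hxy : List.Lex (· < ·) x y
  · exact Or.inr hxy
  · exact Or.inl (Std.Trichotomous.trichotomous x y hxy h)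

theorem min_degree_lex_bound_general
    (n k : ℕ) (hkn : k < n)
    (S : Finset (Finset (Fin n))) (hScard : ∀ X ∈ S, X.card = k) (hm : 1 < S.card)
    (x : Fin n)
    (hmin : ∀ y : Fin n,
      (S.filter (fun X => x ∈ X)).card ≤ (S.filter (fun X => y ∈ X)).card)
    (a : List ℤ) (ha : IsKBinom k (S.card : ℤ) a)
    (b : List ℤ)
    (hb : IsKBinom k ((S.card : ℤ) - ((S.filter (fun X => x ∈ X)).card : ℤ)) b) :
    b ≠ [] ∧ lexLE (a.map (· - 1)) b := by
  have hdeg : n * (S.filter (fun X => x ∈ X)).card ≤ k * S.card := by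
    simpa using card_mul_card_filter_mem_le hScard hmin
  have hchoose : S.card ≤ n.choose k := by simpa using Set.Sized.card_le (𝒜 := S) hScard
  have hdeg_lt : (S.filter (fun X => x ∈ X)).card < S.card :=
    Nat.lt_of_mul_lt_mul_left (hdeg.trans_lt (Nat.mul_lt_mul_of_pos_right hkn (by omega)))
  refine ⟨?_, lexLE_of_not_lex fun hlex => ?_⟩
  · rintro rfl
    have := hb.2
    simp only [B] at this
    omega
  · have hlt := ha.1.isBinomSeq.mul_B_lt_of_lex_map_pred hb.1.isBinomSeq (Int.ofNat_lt.mpr hkn)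
      (by rw [← ha.2, C_natCast]; exact_mod_cast hchoose) hlex
    rw [← ha.2, ← hb.2] at hlt
    have : (n : ℤ) * (S.filter (fun X => x ∈ X)).card ≤ k * S.card := by exact_mod_cast hdeg
    linarith

/-- For an element `x` of minimum degree in `S`, the `k`-binomial decomposition `b`
of `|S| - d_S(x)` is nonempty and satisfies `b ≥_lex a - 1`. -/
theorem min_degree_lex_bound
    (n k : ℕ) (hk : 1 < k) (hkn : k < n)
    (S : Finset (Finset (Fin n))) (hScard : ∀ X ∈ S, X.card = k) (hm : 1 < S.card)
    (hsupp : ∀ y : Fin n, ∃ X ∈ S, y ∈ X)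
    (x : Fin n)
    (hmin : ∀ y : Fin n,
      (S.filter (fun X => x ∈ X)).card ≤ (S.filter (fun X => y ∈ X)).card)
    (a : List ℤ) (ha : IsKBinom k (S.card : ℤ) a)
    (b : List ℤ)
    (hb : IsKBinom k ((S.card : ℤ) - ((S.filter (fun X => x ∈ X)).card : ℤ)) b) :
    b ≠ [] ∧ lexLE (a.map (· - 1)) b :=
  min_degree_lex_bound_general n k hkn S hScard hm x hmin a ha b hb
end
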